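/- Boundedness of the normal-form symbol: For either choice of sign and every integer N ≥ 0, if ξ, η ∈ ℝ³ satisfy 50·|ξ − η| ≤ |η| and |η| ≥ 100, then |ξ|^{N+1} ≤ (51/50)^{N+1} · |η|^{N} · |φ_±(ξ,η)|, where φ_±(ξ,η) := 2ξ·η − |η|² ± |η|. -/

import Mathlib

noncomputable section

open MeasureTheory Real Complex Filter
open scoped ENNReal NNReal

abbrev E3 := EuclideanSpace ℝ (Fin 3)

/-- Fourier transform with convention `𝓕h(ξ) = ∫ e^{-i x·ξ} h(x) dx`. -/
def ft (h : E3 → ℂ) (ξ : E3) : ℂ :=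
  ∫ x : E3, Complex.exp (-Complex.I * ((inner ℝ x ξ : ℝ) : ℂ)) * h x

/-- Inverse Fourier transform. -/
def ftInv (h : E3 → ℂ) (x : E3) : ℂ :=
  ((2 * π : ℝ) : ℂ)⁻¹ ^ 3 * ∫ ξ : E3, Complex.exp (Complex.I * ((inner ℝ x ξ : ℝ) : ℂ)) * h ξ

/-- Fourier multiplier with symbol `m`. -/
def fourierMult (m : E3 → ℂ) (h : E3 → ℂ) : E3 → ℂ :=
  ftInv fun ξ => m ξ * ft h ξ

/-- Schrödinger propagator `e^{itΔ}`, the multiplier with symbol `e^{-it|ξ|²}`. -/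
def schrGroup (t : ℝ) (h : E3 → ℂ) : E3 → ℂ :=
  fourierMult (fun ξ => Complex.exp (-Complex.I * (t : ℂ) * ((‖ξ‖ ^ 2 : ℝ) : ℂ))) h

/-- Half-wave propagator `e^{itΛ}`, the multiplier with symbol `e^{it|ξ|}`. -/
def waveGroup (t : ℝ) (h : E3 → ℂ) : E3 → ℂ :=
  fourierMult (fun ξ => Complex.exp (Complex.I * (t : ℂ) * ((‖ξ‖ : ℝ) : ℂ))) h

/-- `Λ^s`, the multiplier with symbol `|ξ|^s`. -/
def lamPow (s : ℝ) (h : E3 → ℂ) : E3 → ℂ :=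
  fourierMult (fun ξ => ((‖ξ‖ ^ s : ℝ) : ℂ)) h

/-- `⟨Λ⟩`, the multiplier with symbol `(1+|ξ|²)^{1/2}`. -/
def jLam (h : E3 → ℂ) : E3 → ℂ :=
  fourierMult (fun ξ => ((Real.sqrt (1 + ‖ξ‖ ^ 2) : ℝ) : ℂ)) h

/-- Sobolev `H^s` norm. -/
def sobNorm (s : ℝ) (h : E3 → ℂ) : ℝ≥0∞ :=
  eLpNorm (fun ξ => (((1 + ‖ξ‖ ^ 2) ^ (s / 2) : ℝ) : ℂ) * ft h ξ) 2 volume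

/-- Weighted `L²` norm `‖ |x| h ‖_{L²}`. -/
def wNorm1 (h : E3 → ℂ) : ℝ≥0∞ :=
  eLpNorm (fun x : E3 => ((‖x‖ : ℝ) : ℂ) * h x) 2 volume

/-- Weighted `L²` norm `‖ |x|² h ‖_{L²}`. -/
def wNorm2 (h : E3 → ℂ) : ℝ≥0∞ :=
  eLpNorm (fun x : E3 => ((‖x‖ ^ 2 : ℝ) : ℂ) * h x) 2 volume

/-- A Littlewood–Paley function. -/
structure IsLPFunction (φ : E3 → ℝ) : Prop where
  smooth : ContDiff ℝ (⊤ : ℕ∞) φ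
  radial : ∀ x y : E3, ‖x‖ = ‖y‖ → φ x = φ y
  nonneg : ∀ x, 0 ≤ φ x
  le_one : ∀ x, φ x ≤ 1
  supp : ∀ x : E3, φ x ≠ 0 → 1 / 2 ≤ ‖x‖ ∧ ‖x‖ ≤ 2
  sum_one : ∀ ξ : E3, ξ ≠ 0 → HasSum (fun k : ℤ => φ ((2 : ℝ) ^ (-k) • ξ)) 1

/-- Littlewood–Paley projection `P_k`. -/
def lpProj (φLP : E3 → ℝ) (k : ℤ) (h : E3 → ℂ) : E3 → ℂ :=
  fourierMult (fun ξ => ((φLP ((2 : ℝ) ^ (-k) • ξ) : ℝ) : ℂ)) h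

/-- Homogeneous Besov norm `Ḃ^s_{p,1}`. -/
def besovNorm1 (φLP : E3 → ℝ) (s : ℝ) (p : ℝ≥0∞) (h : E3 → ℂ) : ℝ≥0∞ :=
  ∑' k : ℤ, ENNReal.ofReal ((2 : ℝ) ^ (s * k)) * eLpNorm (lpProj φLP k h) p volume

/-- Phases `φ_±` (σ = ±1). -/
def phasePhi (σ : ℝ) (ξ η : E3) : ℝ := 2 * (inner ℝ ξ η : ℝ) - ‖η‖ ^ 2 + σ * ‖η‖

/-- Phases `ψ_±` (σ = ±1). -/
def phasePsi (σ : ℝ) (ξ η : E3) : ℝ := -σ * ‖ξ‖ - ‖ξ‖ ^ 2 + 2 * (inner ℝ ξ η : ℝ)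

/-- The Zakharov profile equations for `(f, g₊, g₋)`. -/
def ProfileEqs (f gp gm : ℝ → SchwartzMap E3 ℂ) : Prop :=
  (∀ t ∈ Set.Ici (0 : ℝ), ∀ ξ : E3,
      HasDerivAt (fun s => ft (⇑(f s)) ξ)
        (-(Complex.I / 2) *
          ((∫ η : E3, Complex.exp (Complex.I * (t : ℂ) * ((phasePhi 1 ξ η : ℝ) : ℂ)) *
              ft (⇑(f t)) (ξ - η) * ft (⇑(gp t)) η) -
            ∫ η : E3, Complex.exp (Complex.I * (t : ℂ) * ((phasePhi (-1) ξ η : ℝ) : ℂ)) *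
              ft (⇑(f t)) (ξ - η) * ft (⇑(gm t)) η)) t) ∧
  (∀ t ∈ Set.Ici (0 : ℝ), ∀ ξ : E3,
      HasDerivAt (fun s => ft (⇑(gp s)) ξ)
        (-Complex.I * ((‖ξ‖ : ℝ) : ℂ) *
          ∫ η : E3, Complex.exp (Complex.I * (t : ℂ) * ((phasePsi 1 ξ η : ℝ) : ℂ)) *
            ft (⇑(f t)) (ξ - η) * (starRingEnd ℂ) (ft (⇑(f t)) η)) t) ∧
  (∀ t ∈ Set.Ici (0 : ℝ), ∀ ξ : E3,
      HasDerivAt (fun s => ft (⇑(gm s)) ξ)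
        (-Complex.I * ((‖ξ‖ : ℝ) : ℂ) *
          ∫ η : E3, Complex.exp (Complex.I * (t : ℂ) * ((phasePsi (-1) ξ η : ℝ) : ℂ)) *
            ft (⇑(f t)) (ξ - η) * (starRingEnd ℂ) (ft (⇑(f t)) η)) t)

/-- The bootstrap norm `X`. -/
def XNorm (φLP : E3 → ℝ) (N : ℕ) (δ α : ℝ) (f gp gm : ℝ → SchwartzMap E3 ℂ) : ℝ≥0∞ :=
  ⨆ t : ℝ, ⨆ _ : 0 ≤ t,
    (ENNReal.ofReal ((1 + t ^ 2) ^ (-(δ / 2))) * sobNorm ((N : ℝ) + 1) (⇑(f t)) +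
      ENNReal.ofReal ((1 + t ^ 2) ^ (-(δ / 2))) * wNorm1 (⇑(f t)) +
      ENNReal.ofReal ((1 + t ^ 2) ^ (-((1 - 2 * α - δ) / 2))) * wNorm2 (⇑(f t)) +
      (sobNorm (N : ℝ) (⇑(gp t)) +
        ENNReal.ofReal ((1 + t ^ 2) ^ ((1 : ℝ) / 2)) *
          besovNorm1 φLP 0 ∞ (waveGroup (-t) (⇑(gp t)))) +
      (sobNorm (N : ℝ) (⇑(gm t)) +
        ENNReal.ofReal ((1 + t ^ 2) ^ ((1 : ℝ) / 2)) *
          besovNorm1 φLP 0 ∞ (waveGroup t (⇑(gm t)))))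

/-- Fourier transform of the wave Duhamel term `G_±` (σ = ±1). -/
def GFour (f : ℝ → SchwartzMap E3 ℂ) (σ : ℝ) (t : ℝ) (ξ : E3) : ℂ :=
  ∫ s in (0 : ℝ)..t,
    ((‖ξ‖ : ℝ) : ℂ) *
      ∫ η : E3, Complex.exp (Complex.I * (s : ℂ) * ((phasePsi σ ξ η : ℝ) : ℂ)) *
        ft (⇑(f s)) (ξ - η) * (starRingEnd ℂ) (ft (⇑(f s)) η)

/-- The wave Duhamel term `G_±` in physical space. -/
def Gterm (f : ℝ → SchwartzMap E3 ℂ) (σ : ℝ) (t : ℝ) : E3 → ℂ :=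
  ftInv (GFour f σ t)

/-- Fourier transform of the Schrödinger Duhamel term `F_±` (σ = ±1, `g` the matching profile). -/
def FFour (f g : ℝ → SchwartzMap E3 ℂ) (σ : ℝ) (t : ℝ) (ξ : E3) : ℂ :=
  ∫ s in (0 : ℝ)..t,
    ∫ η : E3, Complex.exp (Complex.I * (s : ℂ) * ((phasePhi σ ξ η : ℝ) : ℂ)) *
      ft (⇑(f s)) (ξ - η) * ft (⇑(g s)) η

/-- The Schrödinger Duhamel term `F_±` in physical space. -/
def Fterm (f g : ℝ → SchwartzMap E3 ℂ) (σ : ℝ) (t : ℝ) : E3 → ℂ :=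
  ftInv (FFour f g σ t)


/-- A smooth radial spatial cutoff equal to `1` on the unit ball, supported in the ball of radius 2. -/
structure IsCutoff (ρ : E3 → ℝ) : Prop where
  smooth : ContDiff ℝ (⊤ : ℕ∞) ρ
  radial : ∀ x y : E3, ‖x‖ = ‖y‖ → ρ x = ρ y
  nonneg : ∀ x, 0 ≤ ρ x
  le_one : ∀ x, ρ x ≤ 1
  eq_one : ∀ x : E3, ‖x‖ ≤ 1 → ρ x = 1
  supp : ∀ x : E3, ρ x ≠ 0 → ‖x‖ ≤ 2

/-- Localized piece `h_{≤K} = ρ(·/K) h`. -/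
def cutLe (ρ : E3 → ℝ) (K : ℝ) (h : E3 → ℂ) : E3 → ℂ :=
  fun x => ((ρ (K⁻¹ • x) : ℝ) : ℂ) * h x

/-- Far-away piece `h_{≥K} = h - h_{≤K}`. -/
def cutGe (ρ : E3 → ℝ) (K : ℝ) (h : E3 → ℂ) : E3 → ℂ :=
  fun x => h x - cutLe ρ K h x

/-- Littlewood–Paley projection `P_{≤k}`, with symbol `∑_{j≤k} φ(2^{-j}ξ)`. -/
def lpProjLe (φLP : E3 → ℝ) (k : ℤ) (h : E3 → ℂ) : E3 → ℂ :=
  fourierMult (fun ξ => (((∑' j : ℤ, if j ≤ k then φLP ((2 : ℝ) ^ (-j) • ξ) else 0) : ℝ) : ℂ)) h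

/-- Homogeneous Besov norm `Ḃ^s_{p,q}` for general `q ∈ [1,∞]`. -/
def besovNormG (φLP : E3 → ℝ) (s : ℝ) (p q : ℝ≥0∞) (h : E3 → ℂ) : ℝ≥0∞ :=
  if q = ∞ then
    ⨆ k : ℤ, ENNReal.ofReal ((2 : ℝ) ^ (s * k)) * eLpNorm (lpProj φLP k h) p volume
  else
    (∑' k : ℤ, (ENNReal.ofReal ((2 : ℝ) ^ (s * k)) * eLpNorm (lpProj φLP k h) p volume) ^
      q.toReal) ^ (1 / q.toReal)

/-- Laplacian of a (complex-valued) function on `ℝ³`. -/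
def lap (ψ : E3 → ℂ) (x : E3) : ℂ :=
  ∑ i : Fin 3, iteratedFDeriv ℝ 2 ψ x ![EuclideanSpace.single i 1, EuclideanSpace.single i 1]

/-- Laplacian of a real-valued function on `ℝ³`. -/
def lapR (ψ : E3 → ℝ) (x : E3) : ℝ :=
  ∑ i : Fin 3, iteratedFDeriv ℝ 2 ψ x ![EuclideanSpace.single i 1, EuclideanSpace.single i 1]

/-- Fourier transform of the localized wave bilinear term `g₁`. -/
def g1Four (ρ : E3 → ℝ) (f : ℝ → SchwartzMap E3 ℂ) (σ t : ℝ) (ξ : E3) : ℂ :=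
  ∫ s in (0 : ℝ)..t,
    ((‖ξ‖ : ℝ) : ℂ) *
      ∫ η : E3, Complex.exp (Complex.I * (s : ℂ) * ((phasePsi σ ξ η : ℝ) : ℂ)) *
        ft (cutLe ρ (s ^ ((1 : ℝ) / 4)) (⇑(f s))) (ξ - η) *
        (starRingEnd ℂ) (ft (cutLe ρ (s ^ ((1 : ℝ) / 4)) (⇑(f s))) η)

/-- Fourier transform of the far-away wave bilinear term `g₂`. -/
def g2Four (ρ : E3 → ℝ) (f : ℝ → SchwartzMap E3 ℂ) (σ t : ℝ) (ξ : E3) : ℂ :=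
  ∫ s in (0 : ℝ)..t,
    ((‖ξ‖ : ℝ) : ℂ) *
      ∫ η : E3, Complex.exp (Complex.I * (s : ℂ) * ((phasePsi σ ξ η : ℝ) : ℂ)) *
        ft (cutGe ρ (s ^ ((1 : ℝ) / 4)) (⇑(f s))) (ξ - η) *
        (starRingEnd ℂ) (ft (⇑(f s)) η)

/-! Since `ξ - η` is small compared with `η`, the phase is `|η|² + 2 (ξ - η)·η ± |η|`, a
perturbation of `|η|²`, and hence at least `|η|`; together with `|ξ| ≤ (51/50) |η|` this gives
the bound. -/

theorem sq_norm_sub_two_mul_norm_sub_mul_norm_le {E : Type*} [NormedAddCommGroup E]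
    [InnerProductSpace ℝ E] (ξ η : E) :
    ‖η‖ ^ 2 - 2 * (‖ξ - η‖ * ‖η‖) ≤ 2 * inner ℝ ξ η - ‖η‖ ^ 2 := by
  have hinner : inner ℝ ξ η = inner ℝ (ξ - η) η + ‖η‖ ^ 2 := by
    rw [inner_sub_left, real_inner_self_eq_norm_sq]; ring
  have hcs : -(‖ξ - η‖ * ‖η‖) ≤ inner ℝ (ξ - η) η :=
    neg_le_of_abs_le (abs_real_inner_le_norm (ξ - η) η)
  linarith

theorem norm_le_phasePhi {σ : ℝ} (hσ : |σ| ≤ 1) {ξ η : E3}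
    (h1 : 50 * ‖ξ - η‖ ≤ ‖η‖) (h2 : 100 ≤ ‖η‖) : ‖η‖ ≤ phasePhi σ ξ η := by
  have hquad := sq_norm_sub_two_mul_norm_sub_mul_norm_le ξ η
  have hση : -‖η‖ ≤ σ * ‖η‖ := by
    nlinarith [(abs_le.mp hσ).1, norm_nonneg η]
  have hgap : ‖η‖ * (2 * ‖ξ - η‖ + 2) ≤ ‖η‖ * ‖η‖ :=
    mul_le_mul_of_nonneg_left (by linarith) (norm_nonneg η)
  unfold phasePhi
  linarith

/-- Boundedness of the normal-form symbol:
`|ξ|^{N+1} ≤ (51/50)^{N+1} |η|^N |φ_±(ξ,η)|` in the high-frequency regime. -/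
theorem normal_form_symbol_bound (σ : ℝ) (hσ : σ = 1 ∨ σ = -1) (N : ℕ) (ξ η : E3)
    (h1 : 50 * ‖ξ - η‖ ≤ ‖η‖) (h2 : 100 ≤ ‖η‖) :
    ‖ξ‖ ^ (N + 1) ≤ (51 / 50 : ℝ) ^ (N + 1) * ‖η‖ ^ N * |phasePhi σ ξ η| := by
  have hσ' : |σ| ≤ 1 := by rcases hσ with rfl | rfl <;> norm_num
  have hξ : ‖ξ‖ ≤ 51 / 50 * ‖η‖ := by linarith [norm_le_insert' ξ η]
  calc ‖ξ‖ ^ (N + 1) ≤ (51 / 50 * ‖η‖) ^ (N + 1) := by gcongr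
    _ = (51 / 50 : ℝ) ^ (N + 1) * ‖η‖ ^ N * ‖η‖ := by ring
    _ ≤ (51 / 50 : ℝ) ^ (N + 1) * ‖η‖ ^ N * |phasePhi σ ξ η| := by
      gcongr
      exact (norm_le_phasePhi hσ' h1 h2).trans (le_abs_self _)

end
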